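/- arXiv:1911.10826 — 3 statements merged into one kernel-verified Lean document; each statement's English description precedes it below -/
import Mathlib

section
/- Let Ω ⊂ ℝ^d be a bounded domain, T > 0, Ω_T = (0,T) × Ω, M an N-function on Ω_T and M* its convex conjugate. Let ξ_n, ξ ∈ L_M(Ω_T) and η_n, η ∈ L_{M*}(Ω_T) be such that ξ_n → ξ modularly in L_M(Ω_T) and η_n → η modularly in L_{M*}(Ω_T). Then the scalar products converge in L¹: ∫_{Ω_T} |ξ_n(t,x)·η_n(t,x) − ξ(t,x)·η(t,x)| dt dx → 0 as n → ∞. -/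
open Filter Set MeasureTheory

/-- A Young function: `m : [0,∞) → [0,∞)` with `m(s) = 0 ↔ s = 0`, convex,
and superlinear: `m(s)/s → 0` as `s → 0⁺` and `m(s)/s → ∞` as `s → ∞`. -/
def IsYoung (m : ℝ → ℝ) : Prop :=
  (∀ s, 0 ≤ s → 0 ≤ m s) ∧
  (∀ s, 0 ≤ s → (m s = 0 ↔ s = 0)) ∧
  ConvexOn ℝ (Set.Ici 0) m ∧
  Tendsto (fun s => m s / s) (nhdsWithin 0 (Set.Ioi 0)) (nhds 0) ∧
  Tendsto (fun s => m s / s) atTop atTop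

/-- The measure on `Ω_T = (0,T) × Ω` (Lebesgue measure restricted to `(0,T) × Ω`). -/
noncomputable def parMeasure {d : ℕ} (Ω : Set (EuclideanSpace ℝ (Fin d))) (T : ℝ) :
    Measure (ℝ × EuclideanSpace ℝ (Fin d)) :=
  volume.restrict (Set.Ioo 0 T ×ˢ Ω)

/-- An `N`-function on `Ω_T`: even and convex in `ξ`, Carathéodory, and sandwiched between
two Young functions. -/
def IsNFunction {d : ℕ} (μ : Measure (ℝ × EuclideanSpace ℝ (Fin d)))
    (M : ℝ × EuclideanSpace ℝ (Fin d) → EuclideanSpace ℝ (Fin d) → ℝ) : Prop :=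
  (∀ᵐ p ∂μ, ∀ ξ, M p ξ = M p (-ξ)) ∧
  (∀ᵐ p ∂μ, Continuous (M p)) ∧
  (∀ ξ, Measurable fun p => M p ξ) ∧
  (∀ᵐ p ∂μ, ConvexOn ℝ Set.univ (M p)) ∧
  ∃ m₁ m₂, IsYoung m₁ ∧ IsYoung m₂ ∧
    ∀ᵐ p ∂μ, ∀ ξ, m₁ ‖ξ‖ ≤ M p ξ ∧ M p ξ ≤ m₂ ‖ξ‖

/-- The convex conjugate `M*(t,x,η) = sup_{ξ ∈ ℝ^d} (ξ·η − M(t,x,ξ))`. -/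
noncomputable def nConj {d : ℕ}
    (M : ℝ × EuclideanSpace ℝ (Fin d) → EuclideanSpace ℝ (Fin d) → ℝ)
    (p : ℝ × EuclideanSpace ℝ (Fin d)) (η : EuclideanSpace ℝ (Fin d)) : ℝ :=
  sSup (Set.range fun ξ => (@inner ℝ _ _ ξ η) - M p ξ)

/-!
Split `ξₙ·ηₙ − ξ·η = (ξₙ − ξ)·(ηₙ − η) + (ξₙ − ξ)·η + ξ·(ηₙ − η)` and bound every product by the
scaled Fenchel–Young inequality `|x·y| ≤ ab (M(x/a) + M*(y/b))`. For the first term both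
modulars tend to zero, so it tends to zero in `L¹` at once. For a mixed term the bound has the
form `Gₙ + H` with `∫ Gₙ → 0` and `H` integrable. Along a subsequence `Gₙ → 0` a.e.; since the
Young bounds force `M` and `M*` to be small only near the origin, the small factor then tends to
zero a.e., and dominated convergence applied to `min (|term|, H)` concludes. Passing from
subsequences to the whole sequence is the usual sub-subsequence argument.
-/
open scoped ENNReal Topology InnerProductSpace

namespace IsYoung

variable {m : ℝ → ℝ}

theorem map_zero (hm : IsYoung m) : m 0 = 0 := (hm.2.1 0 le_rfl).2 rfl

theorem nonneg (hm : IsYoung m) {s : ℝ} (hs : 0 ≤ s) : 0 ≤ m s := hm.1 s hs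

theorem pos (hm : IsYoung m) {s : ℝ} (hs : 0 < s) : 0 < m s :=
  (hm.nonneg hs.le).lt_of_ne' fun h => hs.ne' ((hm.2.1 s hs.le).1 h)

theorem monotoneOn (hm : IsYoung m) : MonotoneOn m (Ici 0) := by
  intro a ha b hb hab
  rcases (mem_Ici.1 ha).eq_or_lt with rfl | ha₀
  · exact hm.map_zero.trans_le (hm.nonneg hb)
  · exact hm.2.2.1.le_right_of_left_le'' self_mem_Ici hb ha₀ hab
      (hm.map_zero.trans_le (hm.nonneg ha))

theorem eventually_mul_le (hm : IsYoung m) (c : ℝ) : ∀ᶠ s in atTop, c * s ≤ m s :=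
  ((hm.2.2.2.2.eventually_ge_atTop c).and (eventually_gt_atTop 0)).mono
    fun _ ⟨h, hs⟩ => (le_div_iff₀ hs).1 h

theorem exists_lt_mul (hm : IsYoung m) {ε : ℝ} (hε : 0 < ε) : ∃ t > 0, m t < ε * t :=
  let ⟨t, h, ht⟩ := ((hm.2.2.2.1.eventually_lt_const hε).and self_mem_nhdsWithin).exists
  ⟨t, ht, (div_lt_iff₀ ht).1 h⟩

end IsYoung

theorem comap_nhds_zero_le_nhds_zero {E : Type*} [SeminormedAddCommGroup E] {Φ : E → ℝ≥0∞}
    (h : ∀ ε > 0, ∃ δ > 0, ∀ x, Φ x < δ → ‖x‖ < ε) : comap Φ (𝓝 0) ≤ 𝓝 0 :=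
  Metric.nhds_basis_ball.ge_iff.2 fun ε hε =>
    let ⟨δ, hδ, hΦ⟩ := h ε hε
    mem_comap.2 ⟨Iio δ, Iio_mem_nhds hδ, fun x hx => mem_ball_zero_iff.2 (hΦ x hx)⟩

theorem comap_ofReal_nhds_zero_le {E : Type*} [SeminormedAddCommGroup E] {N : E → ℝ} {m : ℝ → ℝ}
    (hm : IsYoung m) (hN : ∀ ξ, m ‖ξ‖ ≤ N ξ) :
    comap (fun ξ => ENNReal.ofReal (N ξ)) (𝓝 0) ≤ 𝓝 0 := by
  refine comap_nhds_zero_le_nhds_zero fun ε hε =>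
    ⟨ENNReal.ofReal (m ε), ENNReal.ofReal_pos.2 (hm.pos hε), fun ξ hξ => ?_⟩
  rw [ENNReal.ofReal_lt_ofReal_iff (hm.pos hε)] at hξ
  by_contra! h
  exact (hm.monotoneOn hε.le (norm_nonneg ξ) h).not_gt ((hN ξ).trans_lt hξ)

theorem comap_comp_smul_nhds_zero_le {E : Type*} [NormedAddCommGroup E] [NormedSpace ℝ E]
    {Φ : E → ℝ≥0∞} (h : comap Φ (𝓝 0) ≤ 𝓝 0) {a : ℝ} (ha : a ≠ 0) :
    comap (fun x => Φ (a • x)) (𝓝 0) ≤ 𝓝 0 :=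
  calc comap (fun x => Φ (a • x)) (𝓝 0) = comap (a • ·) (comap Φ (𝓝 0)) := comap_comap.symm
    _ ≤ comap (a • ·) (𝓝 0) := comap_mono h
    _ = 𝓝 0 := by
      simpa using ((Homeomorph.smulOfNeZero a ha).isInducing.nhds_eq_comap (0 : E)).symm

section FenchelConj

variable {E : Type*} [NormedAddCommGroup E] [InnerProductSpace ℝ E] {N : E → ℝ} {m : ℝ → ℝ}

-- `nConj M p` unfolds to `fenchelConj (M p)`.
noncomputable def fenchelConj (N : E → ℝ) (η : E) : ℝ :=
  sSup (range fun ξ => ⟪ξ, η⟫_ℝ - N ξ)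

theorem bddAbove_range_inner_sub (hm : IsYoung m) (hN : ∀ ξ, m ‖ξ‖ ≤ N ξ) (η : E) :
    BddAbove (range fun ξ => ⟪ξ, η⟫_ℝ - N ξ) := by
  obtain ⟨s₀, hs₀⟩ := (hm.eventually_mul_le ‖η‖).exists_forall_of_atTop
  refine ⟨max s₀ 0 * ‖η‖, forall_mem_range.2 fun ξ => ?_⟩
  have hCS := real_inner_le_norm ξ η
  have hNξ := hN ξ
  rcases le_total s₀ ‖ξ‖ with h | h
  · nlinarith [hs₀ _ h, le_max_right s₀ 0, norm_nonneg η]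
  · nlinarith [hm.nonneg (norm_nonneg ξ),
      mul_le_mul_of_nonneg_right (h.trans (le_max_left s₀ 0)) (norm_nonneg η)]

variable {η : E}

theorem inner_sub_le_fenchelConj (hbdd : BddAbove (range fun ξ => ⟪ξ, η⟫_ℝ - N ξ)) (ξ : E) :
    ⟪ξ, η⟫_ℝ - N ξ ≤ fenchelConj N η :=
  le_csSup hbdd (mem_range_self ξ)

theorem abs_inner_le_add_fenchelConj (heven : ∀ ξ, N ξ = N (-ξ))
    (hbdd : BddAbove (range fun ξ => ⟪ξ, η⟫_ℝ - N ξ)) (ξ : E) :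
    |⟪ξ, η⟫_ℝ| ≤ N ξ + fenchelConj N η := by
  have h₁ := inner_sub_le_fenchelConj hbdd ξ
  have h₂ := inner_sub_le_fenchelConj hbdd (-ξ)
  rw [inner_neg_left, ← heven] at h₂
  exact abs_le.2 ⟨by linarith, by linarith⟩

theorem ofReal_abs_inner_le_mul (heven : ∀ ξ, N ξ = N (-ξ))
    (hbdd : ∀ η, BddAbove (range fun ξ => ⟪ξ, η⟫_ℝ - N ξ)) {a b : ℝ} (ha : 0 < a) (hb : 0 < b)
    (ξ η : E) :
    ENNReal.ofReal |⟪ξ, η⟫_ℝ| ≤ ENNReal.ofReal (a * b) *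
      (ENNReal.ofReal (N (a⁻¹ • ξ)) + ENNReal.ofReal (fenchelConj N (b⁻¹ • η))) := by
  have hscale : ⟪ξ, η⟫_ℝ = a * b * ⟪a⁻¹ • ξ, b⁻¹ • η⟫_ℝ := by
    rw [real_inner_smul_left, real_inner_smul_right]
    field_simp
  calc ENNReal.ofReal |⟪ξ, η⟫_ℝ|
        = ENNReal.ofReal (a * b) * ENNReal.ofReal |⟪a⁻¹ • ξ, b⁻¹ • η⟫_ℝ| := by
        rw [hscale, abs_mul, abs_of_pos (by positivity), ENNReal.ofReal_mul (by positivity)]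
    _ ≤ ENNReal.ofReal (a * b) * ENNReal.ofReal (N (a⁻¹ • ξ) + fenchelConj N (b⁻¹ • η)) := by
        gcongr
        exact abs_inner_le_add_fenchelConj heven (hbdd _) _
    _ ≤ _ := by
        gcongr
        exact ENNReal.ofReal_add_le

theorem mul_norm_sub_le_fenchelConj (hN : ∀ ξ, N ξ ≤ m ‖ξ‖)
    (hbdd : BddAbove (range fun ξ => ⟪ξ, η⟫_ℝ - N ξ)) {t : ℝ} (ht : 0 ≤ t) (hη : η ≠ 0) :
    t * ‖η‖ - m t ≤ fenchelConj N η := by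
  have hη' : 0 < ‖η‖ := norm_pos_iff.2 hη
  have hnorm : ‖(t / ‖η‖) • η‖ = t := by
    rw [norm_smul, Real.norm_of_nonneg (by positivity), div_mul_cancel₀ _ hη'.ne']
  have hinner : ⟪(t / ‖η‖) • η, η⟫_ℝ = t * ‖η‖ := by
    rw [real_inner_smul_left, real_inner_self_eq_norm_sq]
    field_simp
  have := inner_sub_le_fenchelConj hbdd ((t / ‖η‖) • η)
  have := hN ((t / ‖η‖) • η)
  rw [hnorm] at this
  linarith

theorem comap_ofReal_fenchelConj_nhds_zero_le (hm : IsYoung m) (hN : ∀ ξ, N ξ ≤ m ‖ξ‖)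
    (hbdd : ∀ η, BddAbove (range fun ξ => ⟪ξ, η⟫_ℝ - N ξ)) :
    comap (fun η => ENNReal.ofReal (fenchelConj N η)) (𝓝 0) ≤ 𝓝 0 := by
  refine comap_nhds_zero_le_nhds_zero fun ε hε => ?_
  obtain ⟨t, ht, hmt⟩ := hm.exists_lt_mul (half_pos hε)
  refine ⟨ENNReal.ofReal (ε / 2 * t), ENNReal.ofReal_pos.2 (by positivity), fun η hη => ?_⟩
  rw [ENNReal.ofReal_lt_ofReal_iff (by positivity)] at hη
  by_contra! h
  have hlow := mul_norm_sub_le_fenchelConj hN (hbdd η) ht.le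
    (norm_pos_iff.1 (hε.trans_le h))
  nlinarith

end FenchelConj

section Measurability

variable {X E : Type*} [MeasurableSpace X] {μ : Measure X} {N : X → E → ℝ}

theorem aemeasurable_apply_of_ae_continuous [TopologicalSpace E]
    [TopologicalSpace.MetrizableSpace E] [SecondCountableTopology E] [MeasurableSpace E]
    [OpensMeasurableSpace E]
    (hmeas : ∀ ξ, Measurable fun p => N p ξ) (hcont : ∀ᵐ p ∂μ, Continuous (N p))
    {v : X → E} (hv : AEMeasurable v μ) : AEMeasurable (fun p => N p (v p)) μ := by
  classical
  set S := toMeasurable μ {p | ¬Continuous (N p)}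
  -- `N` made continuous everywhere by changing it on the null set `S`
  let N' : E → X → ℝ := fun ξ => S.piecewise 0 fun p => N p ξ
  have hcont' : ∀ p, Continuous fun ξ => N' ξ p := by
    intro p
    by_cases hp : p ∈ S
    · simpa [N', hp] using continuous_const
    · simpa [N', hp] using not_not.1 fun h => hp (subset_toMeasurable _ _ h)
  have hmeas' : ∀ ξ, Measurable (N' ξ) := fun ξ =>
    Measurable.piecewise (measurableSet_toMeasurable _ _) measurable_const (hmeas ξ)
  have hS : ∀ᵐ p ∂μ, p ∉ S := by
    rw [ae_iff]
    simpa [S, measure_toMeasurable] using ae_iff.1 hcont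
  refine ((measurable_uncurry_of_continuous_of_measurable hcont' hmeas').comp_aemeasurable
    (hv.prodMk aemeasurable_id)).congr ?_
  filter_upwards [hS] with p hp
  simp [N', hp]

theorem aemeasurable_fenchelConj [NormedAddCommGroup E] [InnerProductSpace ℝ E]
    [TopologicalSpace.SeparableSpace E] [MeasurableSpace E] [BorelSpace E]
    (hmeas : ∀ ξ, Measurable fun p => N p ξ) (hcont : ∀ᵐ p ∂μ, Continuous (N p))
    {w : X → E} (hw : AEMeasurable w μ) : AEMeasurable (fun p => fenchelConj (N p) (w p)) μ := by
  obtain ⟨S, hSc, hSd⟩ := TopologicalSpace.exists_countable_dense E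
  have := hSc.to_subtype
  have hsup : AEMeasurable (fun p => ⨆ ξ : S, ⟪(ξ : E), w p⟫_ℝ - N p ξ) μ :=
    AEMeasurable.iSup fun ξ => (hw.const_inner (c := (ξ : E))).sub (hmeas ξ).aemeasurable
  refine hsup.congr ?_
  filter_upwards [hcont] with p hp
  exact hSd.ciSup' ((continuous_id.inner continuous_const).sub hp)

end Measurability

section Convergence

variable {X : Type*} [MeasurableSpace X] {μ : Measure X}

theorem exists_seq_ae_tendsto_zero_of_tendsto_lintegral {G : ℕ → X → ℝ≥0∞}
    (hG : ∀ n, AEMeasurable (G n) μ) (h : Tendsto (fun n => ∫⁻ p, G n p ∂μ) atTop (𝓝 0)) :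
    ∃ ns : ℕ → ℕ, Tendsto ns atTop atTop ∧
      ∀ᵐ p ∂μ, Tendsto (fun k => G (ns k) p) atTop (𝓝 0) := by
  have hsmall (k : ℕ) : ∃ n, k ≤ n ∧ ∫⁻ p, G n p ∂μ ≤ 2⁻¹ ^ k :=
    ((eventually_ge_atTop k).and (h.eventually (ge_mem_nhds (ENNReal.pow_pos (by simp) k)))).exists
  choose ns hkns hns using hsmall
  have hsum : ∫⁻ p, ∑' k, G (ns k) p ∂μ ≠ ∞ := by
    rw [lintegral_tsum fun k => hG _]
    refine ne_top_of_le_ne_top ?_ (ENNReal.tsum_le_tsum hns)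
    simp [ENNReal.tsum_geometric, ENNReal.one_sub_inv_two]
  refine ⟨ns, tendsto_atTop_mono hkns tendsto_id, ?_⟩
  filter_upwards [ae_lt_top' (AEMeasurable.tsum fun k => hG _) hsum] with p hp
  exact ENNReal.tendsto_atTop_zero_of_tsum_ne_top hp.ne

theorem tendsto_lintegral_zero_of_le_add {F G : ℕ → X → ℝ≥0∞} {H : X → ℝ≥0∞}
    (hF : ∀ n, AEMeasurable (F n) μ) (hH : AEMeasurable H μ) (hHfin : ∫⁻ p, H p ∂μ ≠ ∞)
    (hle : ∀ n, F n ≤ᵐ[μ] G n + H) (hG : Tendsto (fun n => ∫⁻ p, G n p ∂μ) atTop (𝓝 0))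
    (hlim : ∀ᵐ p ∂μ, Tendsto (fun n => F n p) atTop (𝓝 0)) :
    Tendsto (fun n => ∫⁻ p, F n p ∂μ) atTop (𝓝 0) := by
  -- `min (F n) H` is dominated by the fixed integrable `H`, and `F n` exceeds it by at most `G n`
  have hmin : Tendsto (fun n => ∫⁻ p, min (F n p) (H p) ∂μ) atTop (𝓝 0) := by
    simpa using tendsto_lintegral_of_dominated_convergence' (f := 0) H (fun n => (hF n).min hH)
      (fun n => ae_of_all _ fun p => min_le_right _ _) hHfin
      (hlim.mono fun p hp => by simpa using hp.min tendsto_const_nhds)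
  refine tendsto_of_tendsto_of_tendsto_of_le_of_le tendsto_const_nhds
    (by simpa using hmin.add hG) (fun _ => zero_le) fun n => ?_
  calc ∫⁻ p, F n p ∂μ ≤ ∫⁻ p, min (F n p) (H p) + G n p ∂μ := by
        refine lintegral_mono_ae ((hle n).mono fun p hp => ?_)
        rw [← min_add_add_right]
        exact le_min le_self_add (hp.trans_eq (add_comm _ _))
    _ = ∫⁻ p, min (F n p) (H p) ∂μ + ∫⁻ p, G n p ∂μ := lintegral_add_left' ((hF n).min hH) _

variable {E : Type*} [NormedAddCommGroup E] [InnerProductSpace ℝ E] {Φ Ψ : X → E → ℝ≥0∞}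
  {c : ℝ≥0∞}

theorem tendsto_lintegral_abs_inner_of_tendsto_of_tendsto (hc : c ≠ ∞)
    (hyoung : ∀ᵐ p ∂μ, ∀ x y, ENNReal.ofReal |⟪x, y⟫_ℝ| ≤ c * (Φ p x + Ψ p y))
    {f g : ℕ → X → E} (hΦf : ∀ n, AEMeasurable (fun p => Φ p (f n p)) μ)
    (hf : Tendsto (fun n => ∫⁻ p, Φ p (f n p) ∂μ) atTop (𝓝 0))
    (hg : Tendsto (fun n => ∫⁻ p, Ψ p (g n p) ∂μ) atTop (𝓝 0)) :
    Tendsto (fun n => ∫⁻ p, ENNReal.ofReal |⟪f n p, g n p⟫_ℝ| ∂μ) atTop (𝓝 0) := by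
  refine tendsto_of_tendsto_of_tendsto_of_le_of_le tendsto_const_nhds
    (by simpa using ENNReal.Tendsto.const_mul (hf.add hg) (Or.inr hc)) (fun _ => zero_le)
    fun n => ?_
  calc ∫⁻ p, ENNReal.ofReal |⟪f n p, g n p⟫_ℝ| ∂μ
      ≤ ∫⁻ p, c * (Φ p (f n p) + Ψ p (g n p)) ∂μ :=
        lintegral_mono_ae (hyoung.mono fun p hp => hp _ _)
    _ = c * (∫⁻ p, Φ p (f n p) ∂μ + ∫⁻ p, Ψ p (g n p) ∂μ) := by
      rw [lintegral_const_mul' _ _ hc, lintegral_add_left' (hΦf n)]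

theorem tendsto_lintegral_abs_inner_of_tendsto_of_ne_top [MeasurableSpace E]
    [OpensMeasurableSpace E] [SecondCountableTopology E] (hc : c ≠ ∞)
    (hyoung : ∀ᵐ p ∂μ, ∀ x y, ENNReal.ofReal |⟪x, y⟫_ℝ| ≤ c * (Φ p x + Ψ p y))
    (hΦ : ∀ᵐ p ∂μ, comap (Φ p) (𝓝 0) ≤ 𝓝 0)
    {f : ℕ → X → E} {g : X → E} (hfm : ∀ n, AEMeasurable (f n) μ) (hgm : AEMeasurable g μ)
    (hΦf : ∀ n, AEMeasurable (fun p => Φ p (f n p)) μ) (hΨg : AEMeasurable (fun p => Ψ p (g p)) μ)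
    (hf : Tendsto (fun n => ∫⁻ p, Φ p (f n p) ∂μ) atTop (𝓝 0))
    (hg : ∫⁻ p, Ψ p (g p) ∂μ ≠ ∞) :
    Tendsto (fun n => ∫⁻ p, ENNReal.ofReal |⟪f n p, g p⟫_ℝ| ∂μ) atTop (𝓝 0) := by
  refine tendsto_of_subseq_tendsto fun ns hns => ?_
  obtain ⟨ms, hms, hlim⟩ :=
    exists_seq_ae_tendsto_zero_of_tendsto_lintegral (fun k => hΦf (ns k)) (hf.comp hns)
  refine ⟨ms, tendsto_lintegral_zero_of_le_add (G := fun k p => c * Φ p (f (ns (ms k)) p))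
    (fun k => ((hfm _).inner hgm).abs.ennreal_ofReal) (hΨg.const_mul c) ?_
    (fun k => hyoung.mono fun p hp => (hp _ _).trans_eq (mul_add _ _ _)) ?_ ?_⟩
  · rw [lintegral_const_mul' c _ hc]
    exact ENNReal.mul_ne_top hc hg
  · simp_rw [lintegral_const_mul' c _ hc]
    simpa using ENNReal.Tendsto.const_mul (hf.comp (hns.comp hms)) (Or.inr hc)
  · filter_upwards [hlim, hΦ] with p hp hΦp
    have hf0 : Tendsto (fun k => f (ns (ms k)) p) atTop (𝓝 0) :=
      (tendsto_comap_iff.2 hp).mono_right hΦp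
    simpa using ENNReal.tendsto_ofReal (hf0.inner tendsto_const_nhds).abs

end Convergence

theorem ofReal_abs_inner_sub_inner_le {E : Type*} [NormedAddCommGroup E] [InnerProductSpace ℝ E]
    (x x' y y' : E) :
    ENNReal.ofReal |⟪x', y'⟫_ℝ - ⟪x, y⟫_ℝ| ≤ ENNReal.ofReal |⟪x' - x, y' - y⟫_ℝ|
      + ENNReal.ofReal |⟪x' - x, y⟫_ℝ| + ENNReal.ofReal |⟪y' - y, x⟫_ℝ| := by
  have h : ⟪x', y'⟫_ℝ - ⟪x, y⟫_ℝ = ⟪x' - x, y' - y⟫_ℝ + ⟪x' - x, y⟫_ℝ + ⟪y' - y, x⟫_ℝ := by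
    simp only [inner_sub_left, inner_sub_right, real_inner_comm x]
    ring
  rw [h]
  refine (ENNReal.ofReal_le_ofReal (abs_add_three _ _ _)).trans ?_
  exact ENNReal.ofReal_add_le.trans (add_le_add_left ENNReal.ofReal_add_le _)

namespace IsNFunction

variable {d : ℕ} {μ : Measure (ℝ × EuclideanSpace ℝ (Fin d))}
  {M : ℝ × EuclideanSpace ℝ (Fin d) → EuclideanSpace ℝ (Fin d) → ℝ}

theorem ae_bddAbove (hM : IsNFunction μ M) :
    ∀ᵐ p ∂μ, ∀ η, BddAbove (range fun ξ => ⟪ξ, η⟫_ℝ - M p ξ) := by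
  obtain ⟨-, -, -, -, m₁, _, hm₁, -, hsand⟩ := hM
  filter_upwards [hsand] with p hp using bddAbove_range_inner_sub hm₁ fun ξ => (hp ξ).1

theorem ae_ofReal_abs_inner_le (hM : IsNFunction μ M) {a b : ℝ} (ha : 0 < a) (hb : 0 < b) :
    ∀ᵐ p ∂μ, ∀ x y, ENNReal.ofReal |⟪x, y⟫_ℝ| ≤ ENNReal.ofReal (a * b) *
      (ENNReal.ofReal (M p (a⁻¹ • x)) + ENNReal.ofReal (nConj M p (b⁻¹ • y))) := by
  filter_upwards [hM.1, hM.ae_bddAbove] with p heven hbdd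
  exact ofReal_abs_inner_le_mul heven hbdd ha hb

theorem ae_ofReal_abs_inner_le' (hM : IsNFunction μ M) {a b : ℝ} (ha : 0 < a) (hb : 0 < b) :
    ∀ᵐ p ∂μ, ∀ x y, ENNReal.ofReal |⟪x, y⟫_ℝ| ≤ ENNReal.ofReal (a * b) *
      (ENNReal.ofReal (nConj M p (a⁻¹ • x)) + ENNReal.ofReal (M p (b⁻¹ • y))) := by
  filter_upwards [hM.ae_ofReal_abs_inner_le hb ha] with p hp x y
  rw [real_inner_comm, mul_comm a, add_comm]
  exact hp y x

theorem ae_comap_le (hM : IsNFunction μ M) {a : ℝ} (ha : 0 < a) :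
    ∀ᵐ p ∂μ, comap (fun x => ENNReal.ofReal (M p (a⁻¹ • x))) (𝓝 0) ≤ 𝓝 0 := by
  obtain ⟨-, -, -, -, m₁, _, hm₁, -, hsand⟩ := hM
  filter_upwards [hsand] with p hp
  exact comap_comp_smul_nhds_zero_le (comap_ofReal_nhds_zero_le hm₁ fun ξ => (hp ξ).1)
    (inv_ne_zero ha.ne')

theorem ae_comap_nConj_le (hM : IsNFunction μ M) {b : ℝ} (hb : 0 < b) :
    ∀ᵐ p ∂μ, comap (fun y => ENNReal.ofReal (nConj M p (b⁻¹ • y))) (𝓝 0) ≤ 𝓝 0 := by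
  have hbdd := hM.ae_bddAbove
  obtain ⟨-, -, -, -, _, m₂, -, hm₂, hsand⟩ := hM
  filter_upwards [hsand, hbdd] with p hp hbdd
  exact comap_comp_smul_nhds_zero_le
    (comap_ofReal_fenchelConj_nhds_zero_le hm₂ (fun ξ => (hp ξ).2) hbdd) (inv_ne_zero hb.ne')

theorem aemeasurable_ofReal (hM : IsNFunction μ M)
    {v : ℝ × EuclideanSpace ℝ (Fin d) → EuclideanSpace ℝ (Fin d)} (hv : AEMeasurable v μ) :
    AEMeasurable (fun p => ENNReal.ofReal (M p (v p))) μ :=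
  (aemeasurable_apply_of_ae_continuous hM.2.2.1 hM.2.1 hv).ennreal_ofReal

theorem aemeasurable_ofReal_nConj (hM : IsNFunction μ M)
    {w : ℝ × EuclideanSpace ℝ (Fin d) → EuclideanSpace ℝ (Fin d)} (hw : AEMeasurable w μ) :
    AEMeasurable (fun p => ENNReal.ofReal (nConj M p (w p))) μ :=
  (aemeasurable_fenchelConj hM.2.2.1 hM.2.1 hw).ennreal_ofReal

end IsNFunction

theorem modular_convergence_product_L1_general {d : ℕ}
    (Ω : Set (EuclideanSpace ℝ (Fin d))) (T : ℝ)
    (M : ℝ × EuclideanSpace ℝ (Fin d) → EuclideanSpace ℝ (Fin d) → ℝ)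
    (hM : IsNFunction (parMeasure Ω T) M)
    (ξn ηn : ℕ → ℝ × EuclideanSpace ℝ (Fin d) → EuclideanSpace ℝ (Fin d))
    (ξ η : ℝ × EuclideanSpace ℝ (Fin d) → EuclideanSpace ℝ (Fin d))
    (hξnm : ∀ n, Measurable (ξn n)) (hξm : Measurable ξ)
    (hηnm : ∀ n, Measurable (ηn n)) (hηm : Measurable η)
    -- membership in L_M resp. L_{M*}
    (hξL : ∃ lam > (0 : ℝ),
      ∫⁻ p, ENNReal.ofReal (M p (lam⁻¹ • ξ p)) ∂(parMeasure Ω T) < ⊤)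
    (hηL : ∃ lam > (0 : ℝ),
      ∫⁻ p, ENNReal.ofReal (nConj M p (lam⁻¹ • η p)) ∂(parMeasure Ω T) < ⊤)
    -- modular convergences
    (hmodξ : ∃ lam > (0 : ℝ),
      Tendsto (fun n => ∫⁻ p, ENNReal.ofReal (M p (lam⁻¹ • (ξn n p - ξ p))) ∂(parMeasure Ω T))
        atTop (nhds 0))
    (hmodη : ∃ lam > (0 : ℝ),
      Tendsto
        (fun n => ∫⁻ p, ENNReal.ofReal (nConj M p (lam⁻¹ • (ηn n p - η p))) ∂(parMeasure Ω T))
        atTop (nhds 0)) :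
    Tendsto
      (fun n => ∫⁻ p,
        ENNReal.ofReal |(@inner ℝ _ _ (ξn n p) (ηn n p)) - (@inner ℝ _ _ (ξ p) (η p))|
          ∂(parMeasure Ω T))
      atTop (nhds 0) := by
  obtain ⟨a, ha, hξlim⟩ := hmodξ
  obtain ⟨b, hb, hηlim⟩ := hmodη
  obtain ⟨a', ha', hξfin⟩ := hξL
  obtain ⟨b', hb', hηfin⟩ := hηL
  have hΔξ (n : ℕ) : Measurable fun p => ξn n p - ξ p := (hξnm n).sub hξm
  have hΔη (n : ℕ) : Measurable fun p => ηn n p - η p := (hηnm n).sub hηm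
  have hMΔξ (n : ℕ) := hM.aemeasurable_ofReal ((hΔξ n).const_smul a⁻¹).aemeasurable
  have h₁ := tendsto_lintegral_abs_inner_of_tendsto_of_tendsto ENNReal.ofReal_ne_top
    (hM.ae_ofReal_abs_inner_le ha hb) hMΔξ hξlim hηlim
  have h₂ := tendsto_lintegral_abs_inner_of_tendsto_of_ne_top ENNReal.ofReal_ne_top
    (hM.ae_ofReal_abs_inner_le ha hb') (hM.ae_comap_le ha) (fun n => (hΔξ n).aemeasurable)
    hηm.aemeasurable hMΔξ (hM.aemeasurable_ofReal_nConj (hηm.const_smul b'⁻¹).aemeasurable)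
    hξlim hηfin.ne
  have h₃ := tendsto_lintegral_abs_inner_of_tendsto_of_ne_top ENNReal.ofReal_ne_top
    (hM.ae_ofReal_abs_inner_le' hb ha') (hM.ae_comap_nConj_le hb) (fun n => (hΔη n).aemeasurable)
    hξm.aemeasurable (fun n => hM.aemeasurable_ofReal_nConj ((hΔη n).const_smul b⁻¹).aemeasurable)
    (hM.aemeasurable_ofReal (hξm.const_smul a'⁻¹).aemeasurable) hηlim hξfin.ne
  refine tendsto_of_tendsto_of_tendsto_of_le_of_le tendsto_const_nhds
    (by simpa using (h₁.add h₂).add h₃) (fun _ => zero_le) fun n => ?_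
  refine (lintegral_mono fun p => ofReal_abs_inner_sub_inner_le _ _ _ _).trans_eq ?_
  rw [lintegral_add_left' (by fun_prop), lintegral_add_left' (by fun_prop)]

/-- If `ξ_n → ξ` modularly in `L_M(Ω_T)` and `η_n → η` modularly in `L_{M*}(Ω_T)`,
then `ξ_n·η_n → ξ·η` in `L¹(Ω_T)`. -/
theorem modular_convergence_product_L1 {d : ℕ}
    (Ω : Set (EuclideanSpace ℝ (Fin d))) (T : ℝ) (hT : 0 < T)
    (hΩo : IsOpen Ω) (hΩb : Bornology.IsBounded Ω) (hΩne : Ω.Nonempty)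
    (M : ℝ × EuclideanSpace ℝ (Fin d) → EuclideanSpace ℝ (Fin d) → ℝ)
    (hM : IsNFunction (parMeasure Ω T) M)
    (ξn ηn : ℕ → ℝ × EuclideanSpace ℝ (Fin d) → EuclideanSpace ℝ (Fin d))
    (ξ η : ℝ × EuclideanSpace ℝ (Fin d) → EuclideanSpace ℝ (Fin d))
    (hξnm : ∀ n, Measurable (ξn n)) (hξm : Measurable ξ)
    (hηnm : ∀ n, Measurable (ηn n)) (hηm : Measurable η)
    -- membership in L_M resp. L_{M*}
    (hξnL : ∀ n, ∃ lam > (0 : ℝ),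
      ∫⁻ p, ENNReal.ofReal (M p (lam⁻¹ • ξn n p)) ∂(parMeasure Ω T) < ⊤)
    (hξL : ∃ lam > (0 : ℝ),
      ∫⁻ p, ENNReal.ofReal (M p (lam⁻¹ • ξ p)) ∂(parMeasure Ω T) < ⊤)
    (hηnL : ∀ n, ∃ lam > (0 : ℝ),
      ∫⁻ p, ENNReal.ofReal (nConj M p (lam⁻¹ • ηn n p)) ∂(parMeasure Ω T) < ⊤)
    (hηL : ∃ lam > (0 : ℝ),
      ∫⁻ p, ENNReal.ofReal (nConj M p (lam⁻¹ • η p)) ∂(parMeasure Ω T) < ⊤)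
    -- modular convergences
    (hmodξ : ∃ lam > (0 : ℝ),
      Tendsto (fun n => ∫⁻ p, ENNReal.ofReal (M p (lam⁻¹ • (ξn n p - ξ p))) ∂(parMeasure Ω T))
        atTop (nhds 0))
    (hmodη : ∃ lam > (0 : ℝ),
      Tendsto
        (fun n => ∫⁻ p, ENNReal.ofReal (nConj M p (lam⁻¹ • (ηn n p - η p))) ∂(parMeasure Ω T))
        atTop (nhds 0)) :
    Tendsto
      (fun n => ∫⁻ p,
        ENNReal.ofReal |(@inner ℝ _ _ (ξn n p) (ηn n p)) - (@inner ℝ _ _ (ξ p) (η p))|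
          ∂(parMeasure Ω T))
      atTop (nhds 0) :=
  modular_convergence_product_L1_general Ω T M hM ξn ηn ξ η hξnm hξm hηnm hηm hξL hηL hmodξ hmodη
end

section
/- Let Ω ⊂ ℝ^d be a bounded domain, T > 0, Ω_T = (0,T) × Ω, M an N-function on Ω_T with convex conjugate M*, and m a Young function with m(|η|) ≤ M*(t,x,η) for a.e. (t,x) ∈ Ω_T and all η ∈ ℝ^d. Let A : Ω_T × ℝ^d → ℝ^d, c > 0 and h ∈ L^∞(Ω_T) be such that for a.e. (t,x) ∈ Ω_T and all ξ ∈ ℝ^d, M(t,x,ξ) + M*(t,x, A(t,x,ξ)) ≤ c·A(t,x,ξ)·ξ + h(t,x). Then for every K > 0 there exists a constant C(K) such that |A(t,x,ξ)| ≤ C(K) for a.e. (t,x) ∈ Ω_T and all ξ ∈ ℝ^d with |ξ| ≤ K. -/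
open Filter Set MeasureTheory

/-- Under the coercivity/growth bound
`M(t,x,ξ) + M*(t,x,A(t,x,ξ)) ≤ c·A(t,x,ξ)·ξ + h(t,x)` with `h ∈ L^∞` and
`m(|η|) ≤ M*(t,x,η)` for a Young function `m`, the operator `A` is locally bounded:
for every `K > 0` there is `C(K)` with `|A(t,x,ξ)| ≤ C(K)` whenever `|ξ| ≤ K`. -/
theorem operator_locally_bounded {d : ℕ}
    (Ω : Set (EuclideanSpace ℝ (Fin d))) (T : ℝ) (hT : 0 < T)
    (hΩo : IsOpen Ω) (hΩb : Bornology.IsBounded Ω) (hΩne : Ω.Nonempty)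
    (M : ℝ × EuclideanSpace ℝ (Fin d) → EuclideanSpace ℝ (Fin d) → ℝ)
    (hM : IsNFunction (parMeasure Ω T) M)
    (m : ℝ → ℝ) (hm : IsYoung m)
    (hmM : ∀ᵐ p ∂(parMeasure Ω T), ∀ η, m ‖η‖ ≤ nConj M p η)
    (A : ℝ × EuclideanSpace ℝ (Fin d) → EuclideanSpace ℝ (Fin d) → EuclideanSpace ℝ (Fin d))
    (c : ℝ) (hc : 0 < c) (h : ℝ × EuclideanSpace ℝ (Fin d) → ℝ)
    (hb : ℝ) (hhb : ∀ᵐ p ∂(parMeasure Ω T), |h p| ≤ hb)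
    (hcoer : ∀ᵐ p ∂(parMeasure Ω T), ∀ ξ,
      M p ξ + nConj M p (A p ξ) ≤ c * (@inner ℝ _ _ (A p ξ) ξ) + h p) :
    ∀ K > (0 : ℝ), ∃ CK : ℝ, ∀ᵐ p ∂(parMeasure Ω T), ∀ ξ, ‖ξ‖ ≤ K → ‖A p ξ‖ ≤ CK := by
  intro K hK
  obtain ⟨hme, hcont, hmeas, hconv, m₁, m₂, hm₁, hm₂, hsand⟩ := hM
  obtain ⟨s₀, hs₀⟩ := Filter.eventually_atTop.mp
    (hm.2.2.2.2.eventually_ge_atTop (c * K + |hb| + 1))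
  refine ⟨max s₀ 1, ?_⟩
  filter_upwards [hmM, hcoer, hhb, hsand] with p h1 h2 h3 h4
  intro ξ hξ
  by_contra hA
  push_neg at hA
  set s := ‖A p ξ‖ with hs
  have hs1 : 1 < s := lt_of_le_of_lt (le_max_right _ _) hA
  have hss0 : s₀ ≤ s := le_trans (le_max_left _ _) hA.le
  have hdiv := hs₀ s hss0
  have hms : (c * K + |hb| + 1) * s ≤ m s := (le_div_iff₀ (by linarith)).mp hdiv
  have h5 : m s ≤ nConj M p (A p ξ) := h1 (A p ξ)
  have h6 := h2 ξ
  have hM0 : 0 ≤ M p ξ := le_trans (hm₁.1 ‖ξ‖ (norm_nonneg _)) (h4 ξ).1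
  have hip : @inner ℝ _ _ (A p ξ) ξ ≤ s * K :=
    le_trans (real_inner_le_norm _ _)
      (mul_le_mul_of_nonneg_left hξ (norm_nonneg _))
  have hhp : h p ≤ |hb| := le_trans (le_abs_self _) (le_trans h3 (le_abs_self _))
  nlinarith [mul_le_mul_of_nonneg_left hip hc.le, abs_nonneg hb, hc.le, hK.le]
end

section
/- Let (X, μ) be a finite measure space, m₁ a Young function, and m a Young function differentiable on (0,∞) with convex conjugate m*. For each θ ∈ (0,1] let v_θ : X → ℝ^d be measurable, and suppose there are constants C₁, C₂ (independent of θ) with ∫_X m₁(|v_θ|) dμ ≤ C₁ and θ·∫_X m*(m'(|v_θ|)) dμ ≤ C₂ for all θ ∈ (0,1]. Then for every bounded measurable φ : X → ℝ^d, lim_{θ→0⁺} ∫_X θ·∇_ξ m(|v_θ(x)|)·φ(x) dμ = 0, where ∇_ξ m(|v|) = m'(|v|)·v/|v| for v ≠ 0 and ∇_ξ m(0) = 0. -/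
open Filter Set MeasureTheory Topology Classical

/-- The convex conjugate `m*(s) = sup_{t ∈ [0,∞)} (s·t − m(t))`. -/
noncomputable def youngConj (m : ℝ → ℝ) (s : ℝ) : ℝ :=
  sSup ((fun t => s * t - m t) '' Set.Ici 0)

/-- `∇_ξ m(|v|) = m'(|v|)·v/|v|` for `v ≠ 0`, and `0` for `v = 0`. -/

noncomputable def gradYoung {d : ℕ} (m' : ℝ → ℝ) (v : EuclideanSpace ℝ (Fin d)) :
    EuclideanSpace ℝ (Fin d) :=
  if v = 0 then 0 else (m' ‖v‖ / ‖v‖) • v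

/-!
Young's inequality `s t ≤ m*(s) + m(t)` at `t = 1/δ` gives `m'(r) ≤ δ (m*(m'(r)) + m(1/δ))`.
Hence the integrand is at most `θ B δ (m*(m'(|v_θ|)) + m(1/δ))`, whose integral is at most
`B δ C₂ + θ B δ m(1/δ) μ(X)` by the uniform bound on `θ ∫ m*(m'(|v_θ|))`. Letting first `θ → 0⁺`
and then `δ → 0⁺` gives the claim.
-/

section YoungConj

variable {m : ℝ → ℝ}

lemma bddAbove_image_mul_sub (hm_nonneg : ∀ t, 0 ≤ t → 0 ≤ m t)
    (hm_top : Tendsto (fun t => m t / t) atTop atTop) (s : ℝ) :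
    BddAbove ((fun t => s * t - m t) '' Ici 0) := by
  obtain ⟨T, hT⟩ := eventually_atTop.1 (hm_top.eventually_ge_atTop |s|)
  refine ⟨|s| * max T 1, ?_⟩
  rintro _ ⟨t, ht : 0 ≤ t, rfl⟩
  have hst : s * t ≤ |s| * t := mul_le_mul_of_nonneg_right (le_abs_self s) ht
  have hT1 : 0 ≤ |s| * max T 1 := by positivity
  rcases le_or_gt t (max T 1) with htT | htT
  · have := mul_le_mul_of_nonneg_left htT (abs_nonneg s)
    linarith [hm_nonneg t ht]
  · have htpos : 0 < t := (lt_max_of_lt_right one_pos).trans htT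
    have := (le_div_iff₀ htpos).1 (hT t ((le_max_left T 1).trans htT.le))
    show s * t - m t ≤ _
    linarith

lemma mul_le_youngConj_add (hm_nonneg : ∀ t, 0 ≤ t → 0 ≤ m t)
    (hm_top : Tendsto (fun t => m t / t) atTop atTop) (s : ℝ) {t : ℝ} (ht : 0 ≤ t) :
    s * t ≤ youngConj m s + m t := by
  have := le_csSup (bddAbove_image_mul_sub hm_nonneg hm_top s) (mem_image_of_mem _ ht)
  rw [youngConj]
  linarith

lemma youngConj_nonneg (hm_nonneg : ∀ t, 0 ≤ t → 0 ≤ m t)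
    (hm_top : Tendsto (fun t => m t / t) atTop atTop) (hm0 : m 0 = 0) (s : ℝ) :
    0 ≤ youngConj m s := by
  simpa [hm0] using mul_le_youngConj_add hm_nonneg hm_top s le_rfl

lemma le_mul_youngConj_add (hm_nonneg : ∀ t, 0 ≤ t → 0 ≤ m t)
    (hm_top : Tendsto (fun t => m t / t) atTop atTop) (s : ℝ) {δ : ℝ} (hδ : 0 < δ) :
    s ≤ δ * (youngConj m s + m δ⁻¹) := by
  have := mul_le_mul_of_nonneg_left
    (mul_le_youngConj_add hm_nonneg hm_top s (inv_nonneg.2 hδ.le)) hδ.le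
  rwa [mul_left_comm, mul_inv_cancel₀ hδ.ne', mul_one] at this

end YoungConj

lemma ConvexOn.nonneg_of_hasDerivAt {m : ℝ → ℝ} {r m'r : ℝ} (hconv : ConvexOn ℝ (Ici 0) m)
    (hm0 : m 0 = 0) (hmr : 0 ≤ m r) (hr : 0 < r) (hd : HasDerivAt m m'r r) : 0 ≤ m'r := by
  have hslope := hconv.slope_le_of_hasDerivAt self_mem_Ici (mem_Ici.2 hr.le) hr hd
  rw [slope_def_field, hm0, sub_zero, sub_zero] at hslope
  exact (div_nonneg hmr hr.le).trans hslope

lemma norm_gradYoung_of_ne_zero {d : ℕ} (m' : ℝ → ℝ) {v : EuclideanSpace ℝ (Fin d)}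
    (hv : v ≠ 0) : ‖gradYoung m' v‖ = |m' ‖v‖| := by
  rw [gradYoung, if_neg hv, norm_smul, Real.norm_eq_abs, abs_div, abs_norm,
    div_mul_cancel₀ _ (norm_ne_zero_iff.2 hv)]

lemma norm_gradYoung_le_mul_youngConj_add {d : ℕ} {m m' : ℝ → ℝ}
    (hm_nonneg : ∀ t, 0 ≤ t → 0 ≤ m t) (hm0 : m 0 = 0) (hconv : ConvexOn ℝ (Ici 0) m)
    (hm_top : Tendsto (fun t => m t / t) atTop atTop)
    (hderiv : ∀ r : ℝ, 0 < r → HasDerivAt m (m' r) r)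
    (v : EuclideanSpace ℝ (Fin d)) {δ : ℝ} (hδ : 0 < δ) :
    ‖gradYoung m' v‖ ≤ δ * (youngConj m (m' ‖v‖) + m δ⁻¹) := by
  by_cases hv : v = 0
  · rw [gradYoung, if_pos hv, norm_zero]
    exact mul_nonneg hδ.le (add_nonneg (youngConj_nonneg hm_nonneg hm_top hm0 _)
      (hm_nonneg _ (inv_nonneg.2 hδ.le)))
  · have hr : 0 < ‖v‖ := norm_pos_iff.2 hv
    have hm'r := hconv.nonneg_of_hasDerivAt hm0 (hm_nonneg _ hr.le) hr (hderiv _ hr)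
    rw [norm_gradYoung_of_ne_zero m' hv, abs_of_nonneg hm'r]
    exact le_mul_youngConj_add hm_nonneg hm_top _ hδ

lemma norm_integral_le_of_norm_le_mul_add {X E : Type*} [MeasurableSpace X]
    [NormedAddCommGroup E] [NormedSpace ℝ E] {μ : Measure X} [IsFiniteMeasure μ]
    {f : X → E} {g : X → ℝ} {θ a b C : ℝ} (hθ : 0 ≤ θ) (ha : 0 ≤ a) (hb : 0 ≤ b) (hC : 0 ≤ C)
    (hf : ∀ x, ‖f x‖ ≤ θ * (a * (g x + b)))
    (hg : ENNReal.ofReal θ * ∫⁻ x, ENNReal.ofReal (g x) ∂μ ≤ ENNReal.ofReal C) :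
    ‖∫ x, f x ∂μ‖ ≤ a * C + θ * (a * b * μ.real univ) := by
  have hpt : ∀ x, ‖f x‖ₑ ≤
      ENNReal.ofReal (a * θ) * ENNReal.ofReal (g x) + ENNReal.ofReal (θ * (a * b)) := fun x => by
    rw [← ofReal_norm, ← ENNReal.ofReal_mul (by positivity)]
    exact (ENNReal.ofReal_le_ofReal ((hf x).trans_eq (by ring))).trans ENNReal.ofReal_add_le
  rw [← ENNReal.ofReal_le_ofReal_iff (by positivity), ofReal_norm]
  calc ‖∫ x, f x ∂μ‖ₑ ≤ ∫⁻ x, ‖f x‖ₑ ∂μ := enorm_integral_le_lintegral_enorm f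
    _ ≤ ∫⁻ x, (ENNReal.ofReal (a * θ) * ENNReal.ofReal (g x) +
          ENNReal.ofReal (θ * (a * b))) ∂μ := lintegral_mono hpt
    _ = ENNReal.ofReal a * (ENNReal.ofReal θ * ∫⁻ x, ENNReal.ofReal (g x) ∂μ) +
          ENNReal.ofReal (θ * (a * b)) * μ univ := by
      rw [lintegral_add_right' _ aemeasurable_const, lintegral_const,
        lintegral_const_mul' _ _ ENNReal.ofReal_ne_top, ENNReal.ofReal_mul ha, mul_assoc]
    _ ≤ ENNReal.ofReal a * ENNReal.ofReal C + ENNReal.ofReal (θ * (a * b)) * μ univ := by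
      gcongr
    _ = ENNReal.ofReal (a * C + θ * (a * b * μ.real univ)) := by
      rw [← ofReal_measureReal (μ := μ) (s := univ), ← ENNReal.ofReal_mul ha,
        ← ENNReal.ofReal_mul (by positivity : (0 : ℝ) ≤ θ * (a * b)),
        ← ENNReal.ofReal_add (by positivity) (by positivity)]
      ring_nf

lemma tendsto_nhdsGT_zero_of_norm_le_mul_add {E : Type*} [SeminormedAddCommGroup E]
    {F : ℝ → E} (K : ℝ) (A : ℝ → ℝ)
    (hF : ∀ δ > 0, ∀ᶠ θ in 𝓝[>] 0, ‖F θ‖ ≤ δ * K + θ * A δ) :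
    Tendsto F (𝓝[>] 0) (𝓝 0) := by
  rw [NormedAddGroup.tendsto_nhds_zero]
  intro ε hε
  have hlin : ∀ c : ℝ, Tendsto (fun t : ℝ => t * c) (𝓝[>] 0) (𝓝 0) := fun c => by
    simpa using (continuous_mul_const c).continuousWithinAt.tendsto (s := Ioi 0) (x := 0)
  obtain ⟨δ, hδK, hδ⟩ :=
    (((hlin K).eventually (gt_mem_nhds (half_pos hε))).and self_mem_nhdsWithin).exists
  filter_upwards [hF δ hδ, (hlin (A δ)).eventually (gt_mem_nhds (half_pos hε))] with θ hθ hθA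
  linarith

theorem regularization_term_vanishes_general {d : ℕ} {X : Type*} [MeasurableSpace X]
    (μ : Measure X) [IsFiniteMeasure μ]
    (m m' : ℝ → ℝ) (hm : IsYoung m)
    (hderiv : ∀ r : ℝ, 0 < r → HasDerivAt m (m' r) r)
    (v : ℝ → X → EuclideanSpace ℝ (Fin d))
    (C₂ : ℝ)
    (hb2 : ∀ θ ∈ Set.Ioc (0 : ℝ) 1,
      ENNReal.ofReal θ * ∫⁻ x, ENNReal.ofReal (youngConj m (m' ‖v θ x‖)) ∂μ
        ≤ ENNReal.ofReal C₂)
    (φ : X → EuclideanSpace ℝ (Fin d))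
    (B : ℝ) (hφb : ∀ x, ‖φ x‖ ≤ B) :
    Tendsto (fun θ : ℝ => ∫ x, θ * (@inner ℝ _ _ (gradYoung m' (v θ x)) (φ x)) ∂μ)
      (𝓝[>] 0) (𝓝 0) := by
  obtain ⟨hm_nonneg, hm_zero, hconv, -, hm_top⟩ := hm
  have hm0 : m 0 = 0 := (hm_zero 0 le_rfl).2 rfl
  set B' := max B 0
  set C' := max C₂ 0
  refine tendsto_nhdsGT_zero_of_norm_le_mul_add (B' * C') (fun δ => B' * δ * m δ⁻¹ * μ.real univ)
    fun δ hδ => ?_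
  filter_upwards [Ioc_mem_nhdsGT zero_lt_one] with θ hθ
  have hgrad x := norm_gradYoung_le_mul_youngConj_add hm_nonneg hm0 hconv hm_top hderiv (v θ x) hδ
  have hpt x : ‖θ * (@inner ℝ _ _ (gradYoung m' (v θ x)) (φ x))‖ ≤
      θ * (B' * δ * (youngConj m (m' ‖v θ x‖) + m δ⁻¹)) := by
    rw [norm_mul, Real.norm_of_nonneg hθ.1.le]
    refine mul_le_mul_of_nonneg_left ?_ hθ.1.le
    calc _ ≤ ‖gradYoung m' (v θ x)‖ * ‖φ x‖ := norm_inner_le_norm _ _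
      _ ≤ δ * (youngConj m (m' ‖v θ x‖) + m δ⁻¹) * B' :=
        mul_le_mul (hgrad x) ((hφb x).trans (le_max_left _ _)) (norm_nonneg _)
          ((norm_nonneg _).trans (hgrad x))
      _ = B' * δ * (youngConj m (m' ‖v θ x‖) + m δ⁻¹) := by ring
  calc _ ≤ B' * δ * C' + θ * (B' * δ * m δ⁻¹ * μ.real univ) :=
        norm_integral_le_of_norm_le_mul_add hθ.1.le (by positivity)
          (hm_nonneg _ (by positivity)) (le_max_right _ _) hpt
          ((hb2 θ hθ).trans (ENNReal.ofReal_le_ofReal (le_max_left _ _)))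
    _ = δ * (B' * C') + θ * (B' * δ * m δ⁻¹ * μ.real univ) := by ring

/-- The regularizing term vanishes in the limit: if `∫ m₁(|v_θ|) dμ ≤ C₁` and
`θ·∫ m*(m'(|v_θ|)) dμ ≤ C₂` uniformly in `θ ∈ (0,1]`, then for every bounded measurable
`φ`, `∫ θ·∇_ξ m(|v_θ|)·φ dμ → 0` as `θ → 0⁺`. -/
theorem regularization_term_vanishes {d : ℕ} {X : Type*} [MeasurableSpace X]
    (μ : Measure X) [IsFiniteMeasure μ]
    (m₁ m m' : ℝ → ℝ) (h₁ : IsYoung m₁) (hm : IsYoung m)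
    (hderiv : ∀ r : ℝ, 0 < r → HasDerivAt m (m' r) r)
    (v : ℝ → X → EuclideanSpace ℝ (Fin d))
    (hv : ∀ θ ∈ Set.Ioc (0 : ℝ) 1, Measurable (v θ))
    (C₁ C₂ : ℝ)
    (hb1 : ∀ θ ∈ Set.Ioc (0 : ℝ) 1,
      ∫⁻ x, ENNReal.ofReal (m₁ ‖v θ x‖) ∂μ ≤ ENNReal.ofReal C₁)
    (hb2 : ∀ θ ∈ Set.Ioc (0 : ℝ) 1,
      ENNReal.ofReal θ * ∫⁻ x, ENNReal.ofReal (youngConj m (m' ‖v θ x‖)) ∂μ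
        ≤ ENNReal.ofReal C₂)
    (φ : X → EuclideanSpace ℝ (Fin d)) (hφm : Measurable φ)
    (B : ℝ) (hφb : ∀ x, ‖φ x‖ ≤ B) :
    Tendsto (fun θ : ℝ => ∫ x, θ * (@inner ℝ _ _ (gradYoung m' (v θ x)) (φ x)) ∂μ)
      (𝓝[>] 0) (𝓝 0) :=
  regularization_term_vanishes_general μ m m' hm hderiv v C₂ hb2 φ B hφb
end
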